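/- The set of isolated subgroups of Γ having an immediate predecessor in isolated(Γ) is exactly the set of T-isolated subgroups: IS(isolated(Γ)) = {H_t | t ∈ T}. -/

import Mathlib

/-- The carrier of Γ: functions `T → G` with well-ordered support. -/
def Gamma (T G : Type*) [LinearOrder T] [Zero G] [LT G] : Set (T → G) :=
  {f | (Function.support f).IsWF}

/-- The (left-to-right lexicographic) order on functions `T → G`:
`f ≤ g` iff `f = g` or `f` and `g` agree before some point `t` at which `f t < g t`. -/
def lexLE {T G : Type*} [LinearOrder T] [LT G] (f g : T → G) : Prop :=
  f = g ∨ ∃ t, (∀ s, s < t → f s = g s) ∧ f t < g t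

/-- `H` is an isolated subgroup of Γ: a subgroup of Γ that is convex for the
lexicographic order. -/
def IsIsolated (T G : Type*) [LinearOrder T] [AddCommGroup G] [LinearOrder G] [IsOrderedAddMonoid G]
    (H : Set (T → G)) : Prop :=
  H ⊆ Gamma T G ∧ (0 : T → G) ∈ H ∧ (∀ f ∈ H, ∀ g ∈ H, f + g ∈ H) ∧
  (∀ f ∈ H, -f ∈ H) ∧
  ∀ h ∈ H, ∀ g ∈ Gamma T G, lexLE 0 g → lexLE g h → g ∈ H

/-- The T-isolated subgroup `H_t`: elements of Γ vanishing strictly before `t`. -/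
def Ht (T G : Type*) [LinearOrder T] [Zero G] [LT G] (t : T) : Set (T → G) :=
  {f ∈ Gamma T G | ∀ s, s < t → f s = 0}

/-- The dual T-isolated subgroup `dH_t`: elements of Γ vanishing at and before `t`. -/
def dHt (T G : Type*) [LinearOrder T] [Zero G] [LT G] (t : T) : Set (T → G) :=
  {f ∈ Gamma T G | ∀ s, s ≤ t → f s = 0}

/-- `X` and `Y` are immediate neighbors in `B` (ordered by inclusion). -/
def ImmNbr {α : Type*} (B : Set (Set α)) (X Y : Set α) : Prop :=
  X ∈ B ∧ Y ∈ B ∧ X ⊂ Y ∧ ¬∃ Z ∈ B, X ⊂ Z ∧ Z ⊂ Y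

/-- `ISet B` is the set of members of `B` having an immediate predecessor in `B`. -/
def ISet {α : Type*} (B : Set (Set α)) : Set (Set α) := {Y | ∃ X, ImmNbr B X Y}

/-- `IPSet B` is the set of members of `B` having an immediate successor in `B`. -/
def IPSet {α : Type*} (B : Set (Set α)) : Set (Set α) := {X | ∃ Y, ImmNbr B X Y}

/-!
An isolated subgroup `H` of Γ is determined by the upper set `U` of points of `T` at which some
element of `H` is nonzero: `H` consists of all elements of Γ supported in `U`. Indeed, if `t ∈ U`,
some `h ∈ H` has a positive leading coefficient at a point `s ≤ t`, and since `G` is archimedean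
every element of Γ vanishing below `t` lies, up to sign, between `0` and a multiple of `h`.
Conversely every upper set yields an isolated subgroup in this way, and the correspondence
preserves inclusion in both directions. So the covering pairs of isolated(Γ) are the images of
the covering pairs of upper sets of `T`, and in a linear order these are exactly `Ioi t ⊂ Ici t`.
-/

open Set

section ImmNbr

variable {α β : Type*}

lemma immNbr_image_iff (φ : Set α ↪o Set β) {A : Set (Set α)} {X Y : Set α} :
    ImmNbr (φ '' A) (φ X) (φ Y) ↔ ImmNbr A X Y := by
  simp only [ImmNbr, φ.injective.mem_set_image, φ.lt_iff_lt, exists_mem_image]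

lemma ISet_image (φ : Set α ↪o Set β) (A : Set (Set α)) : ISet (φ '' A) = φ '' ISet A := by
  ext Y
  constructor
  · rintro ⟨X, hXY⟩
    obtain ⟨X', -, rfl⟩ := hXY.1
    obtain ⟨Y', -, rfl⟩ := hXY.2.1
    exact ⟨Y', ⟨X', (immNbr_image_iff φ).1 hXY⟩, rfl⟩
  · rintro ⟨Y', ⟨X', hXY⟩, rfl⟩
    exact ⟨φ X', (immNbr_image_iff φ).2 hXY⟩

lemma ISet_setOf_isUpperSet {T : Type*} [LinearOrder T] :
    ISet {U : Set T | IsUpperSet U} = range Ici := by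
  ext U
  constructor
  · rintro ⟨V, hV, hU, hVU, hno⟩
    obtain ⟨t, htU, htV⟩ := exists_of_ssubset hVU
    have hVt : V ⊆ Ioi t := fun s hs => lt_of_not_ge fun hst => htV (hV hst hs)
    refine ⟨t, not_not.1 fun hne => hno ⟨Ici t, isUpperSet_Ici t, ?_, ?_⟩⟩
    · exact ⟨hVt.trans Ioi_subset_Ici_self, fun h => htV (h (mem_Ici.2 le_rfl))⟩
    · exact ssubset_iff_subset_ne.2 ⟨fun s hs => hU hs htU, hne⟩
  · rintro ⟨t, rfl⟩
    refine ⟨Ioi t, isUpperSet_Ioi t, isUpperSet_Ici t, Ioi_ssubset_Ici_self, ?_⟩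
    rintro ⟨Z, hZ, hlt, hgt⟩
    by_cases ht : t ∈ Z
    · exact hgt.2 fun s hs => hZ hs ht
    · exact hlt.2 fun s hs => lt_of_le_of_ne (hgt.1 hs) fun h => ht (h ▸ hs)

end ImmNbr

section Gamma

variable {T G : Type*} [LinearOrder T]

lemma zero_mem_gamma [Zero G] [LT G] : (0 : T → G) ∈ Gamma T G := by
  simp [Gamma]

lemma add_mem_gamma [AddZeroClass G] [LT G] {f g : T → G} (hf : f ∈ Gamma T G)
    (hg : g ∈ Gamma T G) : f + g ∈ Gamma T G :=
  (hf.union hg).mono (Function.support_add f g)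

lemma neg_mem_gamma [SubtractionMonoid G] [LT G] {f : T → G} (hf : f ∈ Gamma T G) :
    -f ∈ Gamma T G := by
  simpa [Gamma] using hf

lemma single_mem_gamma [Zero G] [LT G] (t : T) (e : G) : Pi.single t e ∈ Gamma T G :=
  (finite_singleton t).isWF.mono Pi.support_single_subset

lemma exists_leading_ne_zero [Zero G] [LT G] {f : T → G} (hf : f ∈ Gamma T G) (h0 : f ≠ 0) :
    ∃ s, (∀ u < s, f u = 0) ∧ f s ≠ 0 := by
  have hne : (Function.support f).Nonempty := Function.support_nonempty_iff.2 h0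
  exact ⟨hf.min hne, fun u hu => not_not.1 fun h => hf.not_lt_min hne h hu, hf.min_mem hne⟩

lemma exists_le_ne_zero_of_lexLE [Zero G] [Preorder G] {g h : T → G} {s : T} (h0g : lexLE 0 g)
    (hgh : lexLE g h) (hs : g s ≠ 0) : ∃ p ≤ s, h p ≠ 0 := by
  rcases h0g with rfl | ⟨t₁, hg₁, hpos₁⟩
  · exact absurd rfl hs
  have ht₁s : t₁ ≤ s := not_lt.1 fun h => hs (hg₁ s h).symm
  rcases hgh with rfl | ⟨t₂, hgh₂, hlt₂⟩
  · exact ⟨s, le_rfl, hs⟩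
  rcases lt_or_ge t₁ t₂ with h₁₂ | h₂₁
  · exact ⟨t₁, ht₁s, by rw [← hgh₂ t₁ h₁₂]; exact hpos₁.ne'⟩
  · have hg₂ : 0 ≤ g t₂ := h₂₁.eq_or_lt.elim (fun h => h ▸ hpos₁.le) fun h => (hg₁ t₂ h).le
    exact ⟨t₂, h₂₁.trans ht₁s, (hg₂.trans_lt hlt₂).ne'⟩

variable [AddCommGroup G] [LinearOrder G] [IsOrderedAddMonoid G]

lemma lexLE_zero_or_lexLE_zero_neg {f : T → G} (hf : f ∈ Gamma T G) :
    lexLE 0 f ∨ lexLE 0 (-f) := by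
  by_cases h0 : f = 0
  · exact Or.inl (Or.inl h0.symm)
  obtain ⟨s, hs, hfs⟩ := exists_leading_ne_zero hf h0
  rcases hfs.lt_or_gt with hneg | hpos
  · exact Or.inr (Or.inr ⟨s, fun u hu => by simp [hs u hu], by simpa using hneg⟩)
  · exact Or.inl (Or.inr ⟨s, fun u hu => (hs u hu).symm, hpos⟩)

lemma exists_lexLE_nsmul [Archimedean G] {g h : T → G} {s t : T} (hst : s ≤ t)
    (hg : ∀ u < t, g u = 0) (hh : ∀ u < s, h u = 0) (hpos : 0 < h s) :
    ∃ N : ℕ, lexLE g (N • h) := by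
  obtain ⟨m, hm⟩ := Archimedean.arch (g s) hpos
  refine ⟨m + 1, Or.inr ⟨s, fun u hu => ?_, ?_⟩⟩
  · simp [hg u (hu.trans_le hst), hh u hu]
  · exact hm.trans_lt (nsmul_lt_nsmul_left hpos m.lt_succ_self)

end Gamma

section SupportedIn

variable {T G : Type*} [LinearOrder T]

def supportedIn (T G : Type*) [LinearOrder T] [Zero G] [LT G] (U : Set T) : Set (T → G) :=
  {f ∈ Gamma T G | Function.support f ⊆ U}

def jointSupport [Zero G] (H : Set (T → G)) : Set T := ⋃ f ∈ H, Function.support f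

lemma supportedIn_Ici [Zero G] [LT G] (t : T) : supportedIn T G (Ici t) = Ht T G t := by
  ext f
  refine and_congr_right fun _ => ?_
  simp only [Function.support_subset_iff', mem_Ici, not_le]

lemma supportedIn_subset_supportedIn_iff [Zero G] [LT G] [Nontrivial G] {U V : Set T} :
    supportedIn T G V ⊆ supportedIn T G U ↔ V ⊆ U := by
  refine ⟨fun h t ht => ?_, fun h f hf => ⟨hf.1, hf.2.trans h⟩⟩
  obtain ⟨e, he⟩ := exists_ne (0 : G)
  have hsingle : Pi.single t e ∈ supportedIn T G V :=
    ⟨single_mem_gamma t e, Pi.support_single_subset.trans (singleton_subset_iff.2 ht)⟩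
  exact (h hsingle).2 (by simp [he])

variable [AddCommGroup G] [LinearOrder G] [IsOrderedAddMonoid G]

lemma isIsolated_supportedIn {U : Set T} (hU : IsUpperSet U) :
    IsIsolated T G (supportedIn T G U) := by
  refine ⟨fun f hf => hf.1, ⟨zero_mem_gamma, by simp⟩, ?_, ?_, ?_⟩
  · rintro f ⟨hf, hfU⟩ g ⟨hg, hgU⟩
    exact ⟨add_mem_gamma hf hg, (Function.support_add f g).trans (union_subset hfU hgU)⟩
  · rintro f ⟨hf, hfU⟩
    exact ⟨neg_mem_gamma hf, (Function.support_neg f).trans_subset hfU⟩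
  · rintro h ⟨-, hhU⟩ g hg h0g hgh
    refine ⟨hg, fun s hs => ?_⟩
    obtain ⟨p, hps, hp⟩ := exists_le_ne_zero_of_lexLE h0g hgh hs
    exact hU hps (hhU hp)

namespace IsIsolated

variable {H : Set (T → G)}

lemma nsmul_mem (hH : IsIsolated T G H) {h : T → G} (hh : h ∈ H) (n : ℕ) : n • h ∈ H := by
  induction n with
  | zero => simpa using hH.2.1
  | succ n ih => simpa [succ_nsmul] using hH.2.2.1 _ ih _ hh

lemma exists_pos_leading (hH : IsIsolated T G H) {f : T → G} {t : T} (hf : f ∈ H)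
    (ht : f t ≠ 0) :
    ∃ h ∈ H, ∃ s ≤ t, (∀ u < s, h u = 0) ∧ 0 < h s := by
  obtain ⟨s, hs, hfs⟩ := exists_leading_ne_zero (hH.1 hf) fun h0 => ht (congrFun h0 t)
  have hst : s ≤ t := not_lt.1 fun h => ht (hs t h)
  rcases hfs.lt_or_gt with hneg | hpos
  · exact ⟨-f, hH.2.2.2.1 f hf, s, hst, fun u hu => by simp [hs u hu], by simpa using hneg⟩
  · exact ⟨f, hf, s, hst, hs, hpos⟩

lemma Ht_subset [Archimedean G] (hH : IsIsolated T G H) {t : T} (ht : t ∈ jointSupport H) :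
    Ht T G t ⊆ H := by
  obtain ⟨f, hf, hft⟩ := mem_iUnion₂.1 ht
  obtain ⟨h, hh, s, hst, hs, hpos⟩ := hH.exists_pos_leading hf hft
  have hnonneg : ∀ g ∈ Ht T G t, lexLE 0 g → g ∈ H := by
    rintro g ⟨hg, hgt⟩ h0g
    obtain ⟨N, hN⟩ := exists_lexLE_nsmul hst hgt hs hpos
    exact hH.2.2.2.2 _ (hH.nsmul_mem hh N) g hg h0g hN
  intro g hg
  rcases lexLE_zero_or_lexLE_zero_neg hg.1 with h0g | h0g
  · exact hnonneg g hg h0g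
  · have hneg : -g ∈ Ht T G t := ⟨neg_mem_gamma hg.1, fun u hu => by simp [hg.2 u hu]⟩
    simpa using hH.2.2.2.1 _ (hnonneg (-g) hneg h0g)

lemma isUpperSet_jointSupport [Archimedean G] (hH : IsIsolated T G H) :
    IsUpperSet (jointSupport H) := by
  intro a b hab ha
  obtain ⟨f, hf, hfa⟩ := mem_iUnion₂.1 ha
  have hsingle : Pi.single b (f a) ∈ H := hH.Ht_subset ha
    ⟨single_mem_gamma b (f a), fun u hu => by simp [(hu.trans_le hab).ne]⟩
  exact mem_iUnion₂.2 ⟨_, hsingle, by simpa using hfa⟩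

lemma eq_supportedIn_jointSupport [Archimedean G] (hH : IsIsolated T G H) :
    H = supportedIn T G (jointSupport H) := by
  refine Subset.antisymm (fun f hf => ⟨hH.1 hf, subset_biUnion_of_mem hf⟩) ?_
  rintro f ⟨hf, hfJ⟩
  by_cases h0 : f = 0
  · exact h0 ▸ hH.2.1
  obtain ⟨s, hs, hfs⟩ := exists_leading_ne_zero hf h0
  exact hH.Ht_subset (hfJ hfs) ⟨hf, hs⟩

end IsIsolated

lemma setOf_isIsolated_eq_image [Archimedean G] :
    {H | IsIsolated T G H} = supportedIn T G '' {U | IsUpperSet U} := by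
  ext H
  constructor
  · intro hH
    exact ⟨_, hH.isUpperSet_jointSupport, hH.eq_supportedIn_jointSupport.symm⟩
  · rintro ⟨U, hU, rfl⟩
    exact isIsolated_supportedIn hU

end SupportedIn

theorem stmt10_general {T G : Type*} [LinearOrder T]
    [AddCommGroup G] [LinearOrder G] [IsOrderedAddMonoid G] [Archimedean G] [Nontrivial G] :
    ISet {H : Set (T → G) | IsIsolated T G H} = {S | ∃ t : T, S = Ht T G t} := by
  let φ : Set T ↪o Set (T → G) :=
    OrderEmbedding.ofMapLEIff (supportedIn T G) fun _ _ => supportedIn_subset_supportedIn_iff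
  have hφ : supportedIn T G '' {U | IsUpperSet U} = φ '' {U | IsUpperSet U} := rfl
  rw [setOf_isIsolated_eq_image, hφ, ISet_image, ISet_setOf_isUpperSet]
  ext S
  simp [φ, supportedIn_Ici, eq_comm]

theorem stmt10 {T G : Type*} [LinearOrder T] [Nonempty T]
    [AddCommGroup G] [LinearOrder G] [IsOrderedAddMonoid G] [Archimedean G] [Nontrivial G] :
    ISet {H : Set (T → G) | IsIsolated T G H} = {S | ∃ t : T, S = Ht T G t} :=
  stmt10_general
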